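/- Let α be a peak composition of n. Then RW_r(α) := {w_r(T) : T ∈ SPIT(α)}, viewed as a subset of S_n, is the left weak Bruhat interval [w_r(T^sink_α), w_r(T^source_α)]_L. -/

import Mathlib

namespace PaperSPIT

/-- The `j`-th part (1-indexed) of a composition presented as a list. -/
def part (α : List ℕ) (j : ℕ) : ℕ := α.getD (j - 1) 0

/-- The largest part. -/
def maxPart (α : List ℕ) : ℕ := α.foldr max 0

/-- The composition diagram: boxes `(i, j)` (column `i`, row `j`), both 1-indexed,
rows numbered from bottom to top. -/
def cd (α : List ℕ) : Finset (ℕ × ℕ) :=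
  (Finset.Icc 1 (maxPart α) ×ˢ Finset.Icc 1 α.length).filter fun p => p.1 ≤ part α p.2

/-- `α` is a composition of `n`. -/
def IsComposition (n : ℕ) (α : List ℕ) : Prop :=
  (∀ a ∈ α, 0 < a) ∧ α.sum = n

/-- `α` is a peak composition of `n`: all parts except possibly the last are `> 1`. -/
def IsPeakComposition (n : ℕ) (α : List ℕ) : Prop :=
  IsComposition n α ∧ ∀ i, i + 1 < α.length → 1 < α.getD i 0

/-- A standard filling of `cd α`: a bijection from the boxes onto `{1, …, n}`
(normalized to be `0` off the diagram). -/
def IsStandardFilling (α : List ℕ) (T : ℕ × ℕ → ℕ) : Prop :=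
  Set.BijOn T (cd α : Set (ℕ × ℕ)) (Set.Icc 1 α.sum) ∧
  ∀ p : ℕ × ℕ, p ∉ cd α → T p = 0

def RowsIncrease (α : List ℕ) (T : ℕ × ℕ → ℕ) : Prop :=
  ∀ i j : ℕ, (i, j) ∈ cd α → (i + 1, j) ∈ cd α → T (i, j) < T (i + 1, j)

def RowsWeaklyIncrease (α : List ℕ) (T : ℕ × ℕ → ℕ) : Prop :=
  ∀ i j : ℕ, (i, j) ∈ cd α → (i + 1, j) ∈ cd α → T (i, j) ≤ T (i + 1, j)

def FirstColIncreases (α : List ℕ) (T : ℕ × ℕ → ℕ) : Prop :=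
  ∀ j : ℕ, (1, j) ∈ cd α → (1, j + 1) ∈ cd α → T (1, j) < T (1, j + 1)

/-- Standard immaculate tableau. -/
def IsSIT (α : List ℕ) (T : ℕ × ℕ → ℕ) : Prop :=
  IsStandardFilling α T ∧ RowsIncrease α T ∧ FirstColIncreases α T

/-- Peak-tableau condition: for every `1 ≤ k ≤ n` the boxes with entries `≤ k`
form the diagram of a peak composition. -/
def PeakCond (α : List ℕ) (T : ℕ × ℕ → ℕ) : Prop :=
  ∀ k : ℕ, 1 ≤ k → k ≤ α.sum → ∃ β : List ℕ,
    IsPeakComposition k β ∧ (cd α).filter (fun p => T p ≤ k) = cd β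

/-- Standard peak immaculate tableau. -/
def IsSPIT (α : List ℕ) (T : ℕ × ℕ → ℕ) : Prop := IsSIT α T ∧ PeakCond α T

def SPITset (α : List ℕ) : Set (ℕ × ℕ → ℕ) := {T | IsSPIT α T}

/-- The Young triple condition. -/
def YoungTriple (α : List ℕ) (T : ℕ × ℕ → ℕ) : Prop :=
  ∀ k i j : ℕ, i < j → (k, j) ∈ cd α → (k + 1, i) ∈ cd α → T (k, j) ≤ T (k + 1, i) →
    (k + 1, j) ∈ cd α ∧ T (k + 1, j) < T (k + 1, i)

/-- Standard Young composition tableau. -/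
def IsSYCT (α : List ℕ) (T : ℕ × ℕ → ℕ) : Prop :=
  IsStandardFilling α T ∧ RowsIncrease α T ∧ FirstColIncreases α T ∧ YoungTriple α T

def SYCTset (α : List ℕ) : Set (ℕ × ℕ → ℕ) := {T | IsSYCT α T}

/-- Standard peak Young composition tableau. -/
def IsSPYCT (α : List ℕ) (T : ℕ × ℕ → ℕ) : Prop := IsSYCT α T ∧ PeakCond α T

def SPYCTset (α : List ℕ) : Set (ℕ × ℕ → ℕ) := {T | IsSPYCT α T}

/-- Row reading word `w_r`: rows from top to bottom, each row left to right. -/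
def wR (α : List ℕ) (T : ℕ × ℕ → ℕ) : List ℕ :=
  ((List.range α.length).reverse.map fun j =>
    (List.range (part α (j + 1))).map fun i => T (i + 1, j + 1)).flatten

/-- The `i`-th column of a filling, read bottom to top. -/
def colList (α : List ℕ) (T : ℕ × ℕ → ℕ) (i : ℕ) : List ℕ :=
  ((List.range α.length).filter fun j => decide (i ≤ part α (j + 1))).map
    fun j => T (i, j + 1)

/-- Column reading word `w_c`: columns left to right, each column bottom to top. -/
def wC (α : List ℕ) (T : ℕ × ℕ → ℕ) : List ℕ :=
  ((List.range (maxPart α)).map fun i => colList α T (i + 1)).flatten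

/-- Young reading word `w_Y`: first column top to bottom, then subsequent columns
bottom to top, columns left to right. -/
def wY (α : List ℕ) (T : ℕ × ℕ → ℕ) : List ℕ :=
  (colList α T 1).reverse ++
    ((List.range (maxPart α - 1)).map fun i => colList α T (i + 2)).flatten

/-- Descent set of a word with distinct letters: `i` such that `i` and `i+1` occur
and `i` occurs to the right of `i+1`. -/
def DesWord (w : List ℕ) : Finset ℕ :=
  w.toFinset.filter fun i => (i + 1) ∈ w ∧ w.idxOf (i + 1) < w.idxOf i


/-- A word of length `n` with distinct letters `1,…,n`, identified with an element of `S_n`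
in one-line notation. -/
def IsPermWord (n : ℕ) (w : List ℕ) : Prop := w.Perm (List.range' 1 n)

/-- Inversions of a word (1-indexed positions): pairs `(i,j)` with `i < j` and the letter at
position `i` larger than the letter at position `j`. -/
def InvW (w : List ℕ) : Set (ℕ × ℕ) :=
  {q | 1 ≤ q.1 ∧ q.1 < q.2 ∧ q.2 ≤ w.length ∧ w.getD (q.2 - 1) 0 < w.getD (q.1 - 1) 0}

/-- The set of column reading words of SPITs of shape `α`. -/
def RWc (α : List ℕ) : Set (List ℕ) := {w | ∃ T ∈ SPITset α, w = wC α T}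

/-- The set of row reading words of SPITs of shape `α`. -/
def RWr (α : List ℕ) : Set (List ℕ) := {w | ∃ T ∈ SPITset α, w = wR α T}

/-- The SPIT `T^source_α`: boxes filled with `1,…,n`, rows from bottom to top,
left to right within each row. -/
def Tsource (α : List ℕ) : ℕ × ℕ → ℕ := fun p =>
  if p ∈ cd α then (α.take (p.2 - 1)).sum + p.1 else 0

/-- The number of boxes in the second column. -/
def col2Len (α : List ℕ) : ℕ := ((cd α).filter fun p => p.1 = 2).card

/-- The SPIT `T^sink_α`: column 1 gets the odd numbers `1,3,…` bottom to top, column 2 the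
even numbers `2,4,…` bottom to top, and the remaining numbers fill the remaining boxes row
by row starting from the top row, increasing consecutively from left to right in each row. -/
def Tsink (α : List ℕ) : ℕ × ℕ → ℕ := fun p =>
  if p ∈ cd α then
    if p.1 = 1 then 2 * p.2 - 1
    else if p.1 = 2 then 2 * p.2
    else α.length + col2Len α + (((α.drop p.2).map fun a => a - 2).sum) + (p.1 - 2)
  else 0

/-!
The inversions of `w_r(T)` are the pairs of boxes `(p, q)`, with `p` read before `q`, such that
`T q < T p`. For `T^source` these are exactly the pairs in different rows, and for `T^sink` the
pairs in which `q` lies in a lower row and in column 1 or 2. Hence `Inv(w_r T) ⊆ Inv(w_r T^source)`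
says that the rows of `T` increase, and then `Inv(w_r T^sink) ⊆ Inv(w_r T)` says that
`T_{2,j} < T_{1,j+1}` for consecutive rows. For a standard filling of a peak shape these two
conditions characterise SPITs: the second one makes the first column increase, and it is exactly
what turns each set `{T ≤ k}`, already closed to the left and down the first column, into the
diagram of a peak composition. Finally every permutation word is `w_r` of a unique standard
filling, read back along the same positions.
-/

lemma le_maxPart {α : List ℕ} {a : ℕ} (h : a ∈ α) : a ≤ maxPart α := by
  induction α with
  | nil => simp at h
  | cons b l ih =>
    rcases List.mem_cons.1 h with rfl | h
    · exact le_max_left _ _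
    · exact (ih h).trans (le_max_right _ _)

lemma part_mem {α : List ℕ} {j : ℕ} (h1 : 1 ≤ j) (h2 : j ≤ α.length) : part α j ∈ α := by
  rw [part, List.getD_eq_getElem _ _ (by omega)]
  exact List.getElem_mem _

lemma mem_cd {α : List ℕ} {i j : ℕ} :
    (i, j) ∈ cd α ↔ 1 ≤ i ∧ 1 ≤ j ∧ j ≤ α.length ∧ i ≤ part α j := by
  simp only [cd, Finset.mem_filter, Finset.mem_product, Finset.mem_Icc]
  exact ⟨fun ⟨⟨⟨hi, _⟩, hj, hjl⟩, hle⟩ => ⟨hi, hj, hjl, hle⟩,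
    fun ⟨hi, hj, hjl, hle⟩ => ⟨⟨⟨hi, hle.trans (le_maxPart (part_mem hj hjl))⟩, hj, hjl⟩, hle⟩⟩

lemma part_pos {α : List ℕ} (hα : ∀ a ∈ α, 0 < a) {j : ℕ} (h1 : 1 ≤ j) (h2 : j ≤ α.length) :
    0 < part α j :=
  hα _ (part_mem h1 h2)

lemma two_le_part {n : ℕ} {α : List ℕ} (hα : IsPeakComposition n α) {j : ℕ} (h1 : 1 ≤ j)
    (h2 : j < α.length) : 2 ≤ part α j :=
  hα.2 (j - 1) (by omega)

lemma getD_add_sum_drop_le (l : List ℕ) {j j' : ℕ} (hj : j < j') (hj' : j' ≤ l.length) :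
    l.getD (j' - 1) 0 + (l.drop j').sum ≤ (l.drop j).sum := by
  have hcons : (l.drop (j' - 1)).sum = l.getD (j' - 1) 0 + (l.drop j').sum := by
    rw [List.drop_eq_getElem_cons (by omega), List.sum_cons, List.getD_eq_getElem _ _ (by omega),
      Nat.sub_add_cancel (by omega)]
  rw [← hcons]
  exact (List.drop_sublist_drop_left l (by omega)).sum_le_sum fun _ _ => Nat.zero_le _

-- 0-based, whereas `InvW` counts positions from 1.
def wRIndex (α : List ℕ) (p : ℕ × ℕ) : ℕ := (α.drop p.2).sum + (p.1 - 1)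

lemma wRIndex_lt_sum {α : List ℕ} {p : ℕ × ℕ} (hp : p ∈ cd α) : wRIndex α p < α.sum := by
  obtain ⟨i, j⟩ := p
  obtain ⟨hi, hj, hjl, hij⟩ := mem_cd.1 hp
  have := getD_add_sum_drop_le α hj hjl
  simp only [wRIndex, List.drop_zero] at this ⊢
  unfold part at hij
  omega

lemma wRIndex_lt_of_row_lt {α : List ℕ} {p q : ℕ × ℕ} (hp : p ∈ cd α) (hq : q ∈ cd α)
    (h : q.2 < p.2) : wRIndex α p < wRIndex α q := by
  obtain ⟨i, j⟩ := p
  obtain ⟨i', j'⟩ := q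
  obtain ⟨hi, hj, hjl, hij⟩ := mem_cd.1 hp
  have := getD_add_sum_drop_le α h hjl
  simp only [wRIndex] at this ⊢
  unfold part at hij
  omega

lemma wRIndex_lt_wRIndex_iff {α : List ℕ} {p q : ℕ × ℕ} (hp : p ∈ cd α) (hq : q ∈ cd α) :
    wRIndex α p < wRIndex α q ↔ q.2 < p.2 ∨ (p.2 = q.2 ∧ p.1 < q.1) := by
  rcases lt_trichotomy p.2 q.2 with h | h | h
  · have := wRIndex_lt_of_row_lt hq hp h
    omega
  · obtain ⟨i, j⟩ := p
    obtain ⟨i', j'⟩ := q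
    have := (mem_cd.1 hp).1
    have := (mem_cd.1 hq).1
    simp only at h
    subst h
    simp only [wRIndex, true_and]
    omega
  · simp [wRIndex_lt_of_row_lt hp hq h, h]

lemma wRIndex_injOn (α : List ℕ) : Set.InjOn (wRIndex α) (cd α) := by
  intro p hp q hq h
  have h1 := (wRIndex_lt_wRIndex_iff hp hq).not.1 h.not_lt
  have h2 := (wRIndex_lt_wRIndex_iff hq hp).not.1 h.symm.not_lt
  exact Prod.ext (by omega) (by omega)

lemma exists_wRIndex_eq {α : List ℕ} {k : ℕ} (hk : k < α.sum) : ∃ p ∈ cd α, wRIndex α p = k := by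
  induction α generalizing k with
  | nil => simp at hk
  | cons a l ih =>
    rw [List.sum_cons] at hk
    rcases lt_or_ge k l.sum with h | h
    · obtain ⟨⟨i, j⟩, hp, rfl⟩ := ih h
      obtain ⟨hi, hj, hjl, hij⟩ := mem_cd.1 hp
      refine ⟨(i, j + 1), mem_cd.2 ⟨hi, by omega, by simpa using hjl, ?_⟩, by simp [wRIndex]⟩
      obtain ⟨j, rfl⟩ := Nat.exists_eq_add_of_le' hj
      simpa [part] using hij
    · refine ⟨(k - l.sum + 1, 1), mem_cd.2 ⟨by omega, le_rfl, by simp, ?_⟩, ?_⟩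
      · show k - l.sum + 1 ≤ a
        omega
      · simp only [wRIndex, List.drop_succ_cons, List.drop_zero]
        omega

lemma card_cd (α : List ℕ) : (cd α).card = α.sum := by
  rw [← Finset.card_range α.sum]
  refine Finset.card_nbij (wRIndex α) (fun p hp => ?_) (wRIndex_injOn α) (fun k hk => ?_)
  · exact Finset.mem_range.2 (wRIndex_lt_sum hp)
  · exact exists_wRIndex_eq (Finset.mem_range.1 hk)

lemma wR_cons (a : ℕ) (l : List ℕ) (T : ℕ × ℕ → ℕ) :
    wR (a :: l) T =
      wR l (fun p => T (p.1, p.2 + 1)) ++ (List.range a).map (fun i => T (i + 1, 1)) := by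
  simp only [wR, List.length_cons, List.range_succ_eq_map, List.reverse_cons,
    ← List.map_reverse, List.map_append, List.flatten_append, List.map_map]
  congr 2
  simp [part]

lemma length_wR (α : List ℕ) (T : ℕ × ℕ → ℕ) : (wR α T).length = α.sum := by
  induction α generalizing T with
  | nil => simp [wR]
  | cons a l ih => simp [wR_cons, ih, add_comm]

lemma wR_getD_wRIndex {α : List ℕ} (T : ℕ × ℕ → ℕ) {p : ℕ × ℕ} (hp : p ∈ cd α) :
    (wR α T).getD (wRIndex α p) 0 = T p := by
  induction α generalizing T p with
  | nil =>
    have := (mem_cd.1 hp).2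
    rw [List.length_nil] at this
    omega
  | cons a l ih =>
    obtain ⟨i, j⟩ := p
    obtain ⟨hi, hj, hjl, hij⟩ := mem_cd.1 hp
    have hlen := length_wR l fun p => T (p.1, p.2 + 1)
    rw [wR_cons]
    obtain ⟨j, rfl⟩ := Nat.exists_eq_add_of_le' hj
    rcases j with _ | j
    · simp only [part, Nat.sub_self, List.getD_cons_zero] at hij
      have hidx : wRIndex (a :: l) (i, 0 + 1) = l.sum + (i - 1) := by simp [wRIndex]
      rw [hidx, ← hlen, List.getD_append_right _ _ _ _ (Nat.le_add_right _ _),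
        Nat.add_sub_cancel_left,
        List.getD_eq_getElem _ _ (by rw [List.length_map, List.length_range]; omega)]
      simp [Nat.sub_add_cancel hi]
    · have hp' : (i, j + 1) ∈ cd l :=
        mem_cd.2 ⟨hi, by omega, by simpa using hjl, by simpa [part] using hij⟩
      have hidx : wRIndex (a :: l) (i, j + 1 + 1) = wRIndex l (i, j + 1) := by simp [wRIndex]
      rw [hidx, List.getD_append _ _ _ _ (by rw [hlen]; exact wRIndex_lt_sum hp')]
      exact ih _ hp'

def ofWord (α w : List ℕ) : ℕ × ℕ → ℕ := fun p => if p ∈ cd α then w.getD (wRIndex α p) 0 else 0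

lemma wR_ofWord {α w : List ℕ} (hw : w.length = α.sum) : wR α (ofWord α w) = w := by
  refine List.ext_getElem (by rw [length_wR, hw]) fun k h1 h2 => ?_
  obtain ⟨p, hp, rfl⟩ := exists_wRIndex_eq (by rwa [length_wR] at h1)
  rw [← List.getD_eq_getElem _ 0 h1, ← List.getD_eq_getElem _ 0 h2, wR_getD_wRIndex _ hp,
    ofWord, if_pos hp]

lemma mem_wR {α : List ℕ} {T : ℕ × ℕ → ℕ} {x : ℕ} : x ∈ wR α T ↔ ∃ p ∈ cd α, T p = x := by
  constructor
  · intro hx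
    obtain ⟨k, hk, rfl⟩ := List.mem_iff_getElem.1 hx
    obtain ⟨p, hp, rfl⟩ := exists_wRIndex_eq (by rwa [length_wR] at hk)
    exact ⟨p, hp, by rw [← wR_getD_wRIndex T hp, List.getD_eq_getElem _ _ hk]⟩
  · rintro ⟨p, hp, rfl⟩
    have hk : wRIndex α p < (wR α T).length := by rw [length_wR]; exact wRIndex_lt_sum hp
    rw [← wR_getD_wRIndex T hp, List.getD_eq_getElem _ _ hk]
    exact List.getElem_mem hk

lemma nodup_wR {α : List ℕ} {T : ℕ × ℕ → ℕ} (hT : Set.InjOn T (cd α)) : (wR α T).Nodup := by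
  rw [List.nodup_iff_injective_getElem]
  rintro ⟨k, hk⟩ ⟨k', hk'⟩ h
  rw [length_wR] at hk hk'
  obtain ⟨p, hp, rfl⟩ := exists_wRIndex_eq hk
  obtain ⟨q, hq, rfl⟩ := exists_wRIndex_eq hk'
  simp only [← List.getD_eq_getElem _ 0, wR_getD_wRIndex T hp, wR_getD_wRIndex T hq] at h
  exact Fin.ext (congrArg (wRIndex α) (hT hp hq h))

lemma IsPermWord.length_eq {n : ℕ} {w : List ℕ} (h : IsPermWord n w) : w.length = n := by
  simpa using List.Perm.length_eq h

lemma IsPermWord.nodup {n : ℕ} {w : List ℕ} (h : IsPermWord n w) : w.Nodup :=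
  (List.Perm.nodup_iff h).2 List.nodup_range'

lemma IsPermWord.mem_iff {n : ℕ} {w : List ℕ} (h : IsPermWord n w) {x : ℕ} :
    x ∈ w ↔ x ∈ Set.Icc 1 n := by
  rw [List.Perm.mem_iff h, List.mem_range'_1, Set.mem_Icc]
  omega

lemma isPermWord_wR {α : List ℕ} {T : ℕ × ℕ → ℕ} (hT : IsStandardFilling α T) :
    IsPermWord α.sum (wR α T) := by
  refine (List.Nodup.subperm (nodup_wR hT.1.injOn) fun x hx => ?_).perm_of_length_le
    (by simp [length_wR])
  obtain ⟨p, hp, rfl⟩ := mem_wR.1 hx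
  obtain ⟨h1, h2⟩ := hT.1.mapsTo hp
  rw [List.mem_range'_1]
  omega

lemma isStandardFilling_ofWord {α w : List ℕ} (hw : IsPermWord α.sum w) :
    IsStandardFilling α (ofWord α w) := by
  have hlen := hw.length_eq
  refine ⟨⟨fun p hp => ?_, fun p hp q hq h => ?_, fun x hx => ?_⟩, fun p hp => if_neg hp⟩
  · have hx : ofWord α w p ∈ wR α (ofWord α w) := mem_wR.2 ⟨p, hp, rfl⟩
    rwa [wR_ofWord hlen, hw.mem_iff] at hx
  · rw [Finset.mem_coe] at hp hq
    rw [ofWord, if_pos hp, ofWord, if_pos hq] at h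
    have hp' := wRIndex_lt_sum hp
    have hq' := wRIndex_lt_sum hq
    rw [List.getD_eq_getElem _ _ (by omega), List.getD_eq_getElem _ _ (by omega)] at h
    exact wRIndex_injOn α hp hq (hw.nodup.getElem_inj_iff.1 h)
  · rw [← hw.mem_iff, ← wR_ofWord hlen] at hx
    exact mem_wR.1 hx

lemma succ_wRIndex_mem_invW_iff {α : List ℕ} (T : ℕ × ℕ → ℕ) {p q : ℕ × ℕ} (hp : p ∈ cd α)
    (hq : q ∈ cd α) :
    (wRIndex α p + 1, wRIndex α q + 1) ∈ InvW (wR α T) ↔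
      wRIndex α p < wRIndex α q ∧ T q < T p := by
  have := wRIndex_lt_sum hq
  simp only [InvW, Set.mem_ofPred_eq, length_wR, Nat.add_sub_cancel, wR_getD_wRIndex T hp,
    wR_getD_wRIndex T hq]
  omega

lemma invW_wR_subset_invW_wR_iff {α : List ℕ} {T T' : ℕ × ℕ → ℕ} :
    InvW (wR α T) ⊆ InvW (wR α T') ↔
      ∀ p ∈ cd α, ∀ q ∈ cd α, wRIndex α p < wRIndex α q → T q < T p → T' q < T' p := by
  constructor
  · intro h p hp q hq hpq hT
    exact ((succ_wRIndex_mem_invW_iff T' hp hq).1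
      (h ((succ_wRIndex_mem_invW_iff T hp hq).2 ⟨hpq, hT⟩))).2
  · rintro h ⟨a, b⟩ hab
    have ⟨ha, hlt, hb, _⟩ : 1 ≤ a ∧ a < b ∧ b ≤ (wR α T).length ∧ _ := hab
    rw [length_wR] at hb
    obtain ⟨p, hp, hpa⟩ := exists_wRIndex_eq (show a - 1 < α.sum by omega)
    obtain ⟨q, hq, hqb⟩ := exists_wRIndex_eq (show b - 1 < α.sum by omega)
    obtain rfl : a = wRIndex α p + 1 := by omega
    obtain rfl : b = wRIndex α q + 1 := by omega
    obtain ⟨hpq, hT⟩ := (succ_wRIndex_mem_invW_iff T hp hq).1 hab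
    exact (succ_wRIndex_mem_invW_iff T' hp hq).2 ⟨hpq, h p hp q hq hpq hT⟩

lemma Tsource_lt_Tsource_iff {α : List ℕ} {p q : ℕ × ℕ} (hp : p ∈ cd α) (hq : q ∈ cd α)
    (hpq : wRIndex α p < wRIndex α q) : Tsource α q < Tsource α p ↔ q.2 < p.2 := by
  obtain ⟨i, j⟩ := p
  obtain ⟨i', j'⟩ := q
  obtain ⟨hi, hj, hjl, hij⟩ := mem_cd.1 hp
  obtain ⟨hi', hj', hjl', hij'⟩ := mem_cd.1 hq
  simp only [Tsource, if_pos hp, if_pos hq]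
  rcases (wRIndex_lt_wRIndex_iff hp hq).1 hpq with h | ⟨h, hii⟩
  · have hsucc := List.sum_take_succ α (j' - 1) (by omega)
    have hmono := List.monotone_sum_take α (show j' - 1 + 1 ≤ j - 1 by simp only at h; omega)
    simp only [Nat.sub_add_cancel hj'] at hsucc hmono
    rw [part, List.getD_eq_getElem _ _ (by omega)] at hij'
    simp only at h ⊢
    omega
  · simp only at h hii ⊢
    subst h
    omega

lemma Tsink_of_le_two {α : List ℕ} {i j : ℕ} (h : (i, j) ∈ cd α) (hi : i ≤ 2) :
    Tsink α (i, j) = 2 * j + i - 2 := by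
  have := mem_cd.1 h
  obtain rfl | rfl : i = 1 ∨ i = 2 := by omega
  · simp [Tsink, h]
  · simp [Tsink, h]

lemma Tsink_of_three_le {α : List ℕ} {i j : ℕ} (h : (i, j) ∈ cd α) (hi : 3 ≤ i) :
    Tsink α (i, j) = α.length + col2Len α + ((α.drop j).map (· - 2)).sum + (i - 2) := by
  simp [Tsink, h, show i ≠ 1 by omega, show i ≠ 2 by omega]

lemma le_col2Len {n : ℕ} {α : List ℕ} (hα : IsPeakComposition n α) {j : ℕ} (h : (2, j) ∈ cd α) :
    j ≤ col2Len α := by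
  obtain ⟨-, hj, hjl, h2⟩ := mem_cd.1 h
  calc j = (Finset.Icc 1 j).card := by simp
    _ ≤ col2Len α := by
      refine Finset.card_le_card_of_injOn (fun j' => (2, j')) (fun j' hj' => ?_)
        fun _ _ _ _ h => (Prod.ext_iff.1 h).2
      rw [Finset.mem_coe, Finset.mem_Icc] at hj'
      simp only [Finset.mem_coe, Finset.mem_filter, and_true]
      refine mem_cd.2 ⟨by norm_num, hj'.1, by omega, ?_⟩
      rcases hj'.2.lt_or_eq with hlt | rfl
      · exact two_le_part hα hj'.1 (by omega)
      · exact h2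

lemma Tsink_le_of_le_two {n : ℕ} {α : List ℕ} (hα : IsPeakComposition n α) {i j : ℕ}
    (h : (i, j) ∈ cd α) (hi : i ≤ 2) : Tsink α (i, j) ≤ α.length + col2Len α := by
  have := mem_cd.1 h
  rw [Tsink_of_le_two h hi]
  obtain rfl | rfl : i = 1 ∨ i = 2 := by omega
  · rcases lt_or_ge 1 α.length with hl | hl
    · have := le_col2Len hα (j := α.length - 1)
        (mem_cd.2 ⟨by norm_num, by omega, by omega, two_le_part hα (by omega) (by omega)⟩)
      omega
    · omega
  · have := le_col2Len hα h
    omega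

lemma Tsink_lt_Tsink_iff {n : ℕ} {α : List ℕ} (hα : IsPeakComposition n α) {p q : ℕ × ℕ}
    (hp : p ∈ cd α) (hq : q ∈ cd α) (hpq : wRIndex α p < wRIndex α q) :
    Tsink α q < Tsink α p ↔ q.2 < p.2 ∧ q.1 ≤ 2 := by
  obtain ⟨i, j⟩ := p
  obtain ⟨i', j'⟩ := q
  obtain ⟨hi, hj, hjl, hij⟩ := mem_cd.1 hp
  obtain ⟨hi', hj', hjl', hij'⟩ := mem_cd.1 hq
  simp only
  rcases (wRIndex_lt_wRIndex_iff hp hq).1 hpq with h | ⟨h, hii⟩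
  · simp only at h
    simp only [h, true_and]
    rcases le_or_gt i 2 with hi2 | hi3 <;> rcases le_or_gt i' 2 with hi2' | hi3'
    · rw [Tsink_of_le_two hp hi2, Tsink_of_le_two hq hi2']
      omega
    · have := Tsink_le_of_le_two hα hp hi2
      rw [Tsink_of_three_le hq hi3']
      omega
    · have := Tsink_le_of_le_two hα hq hi2'
      rw [Tsink_of_three_le hp hi3]
      omega
    · have hS := getD_add_sum_drop_le (α.map (· - 2)) h (by simpa using hjl)
      have hpart : (α.map (· - 2)).getD (j - 1) 0 = part α j - 2 := by
        rw [part, List.getD_eq_getElem _ _ (by rw [List.length_map]; omega),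
          List.getD_eq_getElem _ _ (by omega), List.getElem_map]
      rw [hpart, ← List.map_drop, ← List.map_drop] at hS
      rw [Tsink_of_three_le hp hi3, Tsink_of_three_le hq hi3']
      omega
  · simp only at h hii
    subst h
    simp only [lt_irrefl, false_and, iff_false, not_lt]
    rcases le_or_gt i' 2 with hi2' | hi3'
    · rw [Tsink_of_le_two hp (by omega), Tsink_of_le_two hq hi2']
      omega
    rcases le_or_gt i 2 with hi2 | hi3
    · have := Tsink_le_of_le_two hα hp hi2
      rw [Tsink_of_three_le hq hi3']
      omega
    · rw [Tsink_of_three_le hp hi3, Tsink_of_three_le hq hi3']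
      omega

def SecondLtNextFirst (α : List ℕ) (T : ℕ × ℕ → ℕ) : Prop :=
  ∀ j, 1 ≤ j → j < α.length → T (2, j) < T (1, j + 1)

lemma RowsIncrease.lt {α : List ℕ} {T : ℕ × ℕ → ℕ} (hrow : RowsIncrease α T) {i i' j : ℕ}
    (h : (i, j) ∈ cd α) (h' : (i', j) ∈ cd α) (hii : i < i') : T (i, j) < T (i', j) := by
  obtain ⟨hi, hj, hjl, hij⟩ := mem_cd.1 h
  have hmono : StrictMonoOn (fun i => T (i, j)) (Set.Icc 1 (part α j)) :=
    strictMonoOn_of_lt_succ Set.ordConnected_Icc fun a _ ha ha' => by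
      rw [Order.succ_eq_add_one] at ha' ⊢
      exact hrow a j (mem_cd.2 ⟨ha.1, hj, hjl, ha.2⟩) (mem_cd.2 ⟨by omega, hj, hjl, ha'.2⟩)
  exact hmono ⟨hi, hij⟩ ⟨by omega, (mem_cd.1 h').2.2.2⟩ hii

lemma RowsIncrease.le {α : List ℕ} {T : ℕ × ℕ → ℕ} (hrow : RowsIncrease α T) {i i' j : ℕ}
    (h : (i, j) ∈ cd α) (h' : (i', j) ∈ cd α) (hii : i ≤ i') : T (i, j) ≤ T (i', j) := by
  rcases hii.lt_or_eq with hlt | rfl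
  · exact (hrow.lt h h' hlt).le
  · exact le_rfl

lemma FirstColIncreases.le {α : List ℕ} {T : ℕ × ℕ → ℕ} (hcol : FirstColIncreases α T)
    (hα : ∀ a ∈ α, 0 < a) {j j' : ℕ} (hj : 1 ≤ j) (h' : (1, j') ∈ cd α) (hjj : j ≤ j') :
    T (1, j) ≤ T (1, j') := by
  have hj' := (mem_cd.1 h').2.2.1
  have hmono : StrictMonoOn (fun j => T (1, j)) (Set.Icc 1 α.length) :=
    strictMonoOn_of_lt_succ Set.ordConnected_Icc fun a _ ha ha' => by
      rw [Order.succ_eq_add_one] at ha' ⊢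
      exact hcol a (mem_cd.2 ⟨le_rfl, ha.1, ha.2, part_pos hα ha.1 ha.2⟩)
        (mem_cd.2 ⟨le_rfl, by omega, ha'.2, part_pos hα (by omega) ha'.2⟩)
  exact (hmono.le_iff_le ⟨hj, by omega⟩ ⟨by omega, hj'⟩).2 hjj

lemma SecondLtNextFirst.firstColIncreases {n : ℕ} {α : List ℕ} {T : ℕ × ℕ → ℕ}
    (hsec : SecondLtNextFirst α T) (hα : IsPeakComposition n α) (hrow : RowsIncrease α T) :
    FirstColIncreases α T := by
  intro j h h'
  obtain ⟨-, hj, hjl, -⟩ := mem_cd.1 h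
  have hjl' := (mem_cd.1 h').2.2.1
  exact (hrow 1 j h (mem_cd.2 ⟨by norm_num, hj, hjl, two_le_part hα hj (by omega)⟩)).trans
    (hsec j hj (by omega))

lemma SecondLtNextFirst.lt_of_row_lt {n : ℕ} {α : List ℕ} {T : ℕ × ℕ → ℕ}
    (hsec : SecondLtNextFirst α T) (hα : IsPeakComposition n α) (hrow : RowsIncrease α T)
    {p q : ℕ × ℕ} (hp : p ∈ cd α) (hq : q ∈ cd α) (h : q.2 < p.2) (hq2 : q.1 ≤ 2) :
    T q < T p := by
  obtain ⟨i, j⟩ := p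
  obtain ⟨i', j'⟩ := q
  obtain ⟨hi, hj, hjl, -⟩ := mem_cd.1 hp
  obtain ⟨-, hj', -, -⟩ := mem_cd.1 hq
  simp only at h hq2
  have h2 : (2, j') ∈ cd α := mem_cd.2 ⟨by norm_num, hj', by omega, two_le_part hα hj' (by omega)⟩
  have h1 : (1, j) ∈ cd α := mem_cd.2 ⟨le_rfl, hj, hjl, part_pos hα.1.1 hj hjl⟩
  calc T (i', j') ≤ T (2, j') := hrow.le hq h2 hq2
    _ < T (1, j' + 1) := hsec j' hj' (by omega)
    _ ≤ T (1, j) := (hsec.firstColIncreases hα hrow).le hα.1.1 (by omega) h1 h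
    _ ≤ T (i, j) := hrow.le h1 hp hi

lemma PeakCond.secondLtNextFirst {α : List ℕ} {T : ℕ × ℕ → ℕ} (hpeak : PeakCond α T)
    (hα : ∀ a ∈ α, 0 < a) (hT : IsStandardFilling α T) : SecondLtNextFirst α T := by
  intro j hj hjl
  have h1 : (1, j + 1) ∈ cd α := mem_cd.2 ⟨le_rfl, by omega, hjl, part_pos hα (by omega) hjl⟩
  obtain ⟨hk1, hkn⟩ := hT.1.mapsTo h1
  obtain ⟨β, hβ, hS⟩ := hpeak _ hk1 hkn
  have h1β : (1, j + 1) ∈ cd β := hS ▸ Finset.mem_filter.2 ⟨h1, le_rfl⟩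
  have hjβ := (mem_cd.1 h1β).2.2.1
  have h2β : (2, j) ∈ cd β := mem_cd.2 ⟨by norm_num, hj, by omega, two_le_part hβ hj hjβ⟩
  rw [← hS, Finset.mem_filter] at h2β
  refine h2β.2.lt_of_ne fun heq => ?_
  simpa using hT.1.injOn h2β.1 h1 heq

lemma eq_Icc_one_card {S : Finset ℕ} (h0 : 0 ∉ S) (hS : ∀ a ∈ S, ∀ b, 1 ≤ b → b ≤ a → b ∈ S) :
    S = Finset.Icc 1 S.card := by
  refine Finset.eq_of_subset_of_card_le (fun a ha => Finset.mem_Icc.2 ⟨?_, ?_⟩) (by simp)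
  · exact Nat.one_le_iff_ne_zero.2 fun h => h0 (h ▸ ha)
  · calc a = (Finset.Icc 1 a).card := by simp
      _ ≤ S.card := Finset.card_le_card fun b hb => hS a ha b (Finset.mem_Icc.1 hb).1
          (Finset.mem_Icc.1 hb).2

lemma exists_cd_eq {S : Finset (ℕ × ℕ)} (hpos : ∀ p ∈ S, 1 ≤ p.1 ∧ 1 ≤ p.2)
    (hrow : ∀ i j, (i, j) ∈ S → ∀ i', 1 ≤ i' → i' ≤ i → (i', j) ∈ S)
    (hcol : ∀ j, (1, j) ∈ S → ∀ j', 1 ≤ j' → j' ≤ j → (1, j') ∈ S) :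
    ∃ β : List ℕ, (∀ a ∈ β, 0 < a) ∧ cd β = S := by
  set R : ℕ → Finset ℕ := fun j => (S.filter (·.2 = j)).image Prod.fst
  set C : Finset ℕ := (S.filter (·.1 = 1)).image Prod.snd
  have hR : ∀ i j, (i, j) ∈ S ↔ 1 ≤ i ∧ i ≤ (R j).card := by
    intro i j
    have hmem : ∀ i, i ∈ R j ↔ (i, j) ∈ S := by simp [R]
    have := eq_Icc_one_card (S := R j) (fun h => by simpa using (hpos _ ((hmem 0).1 h)).1)
      fun a ha b hb hba => (hmem b).2 (hrow a j ((hmem a).1 ha) b hb hba)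
    rw [← hmem, this, Finset.mem_Icc, ← this]
  have hC : ∀ j, (1, j) ∈ S ↔ 1 ≤ j ∧ j ≤ C.card := by
    intro j
    have hmem : ∀ j, j ∈ C ↔ (1, j) ∈ S := by simp [C]
    have := eq_Icc_one_card (S := C) (fun h => by simpa using (hpos _ ((hmem 0).1 h)).2)
      fun a ha b hb hba => (hmem b).2 (hcol a ((hmem a).1 ha) b hb hba)
    rw [← hmem, this, Finset.mem_Icc, ← this]
  have hpart : ∀ j, 1 ≤ j → j ≤ C.card →
      part ((List.range C.card).map fun r => (R (r + 1)).card) j = (R j).card := by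
    intro j hj hjC
    rw [part, List.getD_eq_getElem _ _ (by rw [List.length_map, List.length_range]; omega)]
    simp [Nat.sub_add_cancel hj]
  refine ⟨(List.range C.card).map fun r => (R (r + 1)).card, fun a ha => ?_, ?_⟩
  · obtain ⟨r, hr, rfl⟩ := List.mem_map.1 ha
    exact ((hR 1 (r + 1)).1 ((hC (r + 1)).2 ⟨by omega, List.mem_range.1 hr⟩)).2
  · ext ⟨i, j⟩
    rw [mem_cd, List.length_map, List.length_range]
    constructor
    · rintro ⟨hi, hj, hjC, hij⟩
      exact (hR i j).2 ⟨hi, hpart j hj hjC ▸ hij⟩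
    · intro h
      obtain ⟨hi, hj⟩ := hpos _ h
      have hjC := ((hC j).1 (hrow i j h 1 le_rfl hi)).2
      exact ⟨hi, hj, hjC, (hpart j hj hjC).symm ▸ ((hR i j).1 h).2⟩

lemma IsStandardFilling.card_filter_le {α : List ℕ} {T : ℕ × ℕ → ℕ} (hT : IsStandardFilling α T)
    {k : ℕ} (hk : k ≤ α.sum) : ((cd α).filter fun p => T p ≤ k).card = k := by
  refine (Finset.card_nbij (t := Finset.Icc 1 k) T (fun p hp => ?_)
    (hT.1.injOn.mono fun p hp => (Finset.mem_filter.1 hp).1) fun x hx => ?_).trans (by simp)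
  · obtain ⟨hp, hpk⟩ := Finset.mem_filter.1 hp
    exact Finset.mem_Icc.2 ⟨(hT.1.mapsTo hp).1, hpk⟩
  · obtain ⟨hx1, hxk⟩ := Finset.mem_Icc.1 hx
    obtain ⟨p, hp, rfl⟩ := hT.1.surjOn ⟨hx1, hxk.trans hk⟩
    exact ⟨p, Finset.mem_filter.2 ⟨hp, hxk⟩, rfl⟩

lemma SecondLtNextFirst.peakCond {n : ℕ} {α : List ℕ} {T : ℕ × ℕ → ℕ}
    (hsec : SecondLtNextFirst α T) (hα : IsPeakComposition n α) (hT : IsStandardFilling α T)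
    (hrow : RowsIncrease α T) : PeakCond α T := by
  have hcol := hsec.firstColIncreases hα hrow
  intro k hk1 hkn
  set S := (cd α).filter fun p => T p ≤ k
  have memS : ∀ p, p ∈ S ↔ p ∈ cd α ∧ T p ≤ k := fun p => Finset.mem_filter
  obtain ⟨β, hβ, hβS⟩ := exists_cd_eq (S := S)
    (fun p hp => ⟨(mem_cd.1 ((memS p).1 hp).1).1, (mem_cd.1 ((memS p).1 hp).1).2.1⟩)
    (fun i j h i' hi' hii => by
      obtain ⟨h, hk⟩ := (memS _).1 h
      have hcd : (i', j) ∈ cd α := by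
        obtain ⟨-, hj, hjl, hij⟩ := mem_cd.1 h
        exact mem_cd.2 ⟨hi', hj, hjl, hii.trans hij⟩
      exact (memS _).2 ⟨hcd, (hrow.le hcd h hii).trans hk⟩)
    (fun j h j' hj' hjj => by
      obtain ⟨h, hk⟩ := (memS _).1 h
      have hcd : (1, j') ∈ cd α := by
        obtain ⟨-, -, hjl, -⟩ := mem_cd.1 h
        exact mem_cd.2 ⟨le_rfl, hj', by omega, part_pos hα.1.1 hj' (by omega)⟩
      exact (memS _).2 ⟨hcd, (hcol.le hα.1.1 hj' h hjj).trans hk⟩)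
  refine ⟨β, ⟨⟨hβ, by rw [← card_cd, hβS, hT.card_filter_le hkn]⟩, fun r hr => ?_⟩, hβS.symm⟩
  have h1 : (1, r + 2) ∈ S :=
    hβS ▸ mem_cd.2 ⟨le_rfl, by omega, by omega, part_pos hβ (by omega) (by omega)⟩
  obtain ⟨h1α, h1k⟩ := (memS _).1 h1
  have hrα := (mem_cd.1 h1α).2.2.1
  have h2 : (2, r + 1) ∈ cd α :=
    mem_cd.2 ⟨by norm_num, by omega, by omega, two_le_part hα (by omega) (by omega)⟩
  have h2β : (2, r + 1) ∈ cd β :=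
    hβS ▸ (memS _).2 ⟨h2, ((hsec (r + 1) (by omega) (by omega)).trans_le h1k).le⟩
  exact (mem_cd.1 h2β).2.2.2

lemma isSPIT_iff {n : ℕ} {α : List ℕ} {T : ℕ × ℕ → ℕ} (hα : IsPeakComposition n α)
    (hT : IsStandardFilling α T) : IsSPIT α T ↔ RowsIncrease α T ∧ SecondLtNextFirst α T :=
  ⟨fun h => ⟨h.1.2.1, h.2.secondLtNextFirst hα.1.1 hT⟩, fun ⟨hrow, hsec⟩ =>
    ⟨⟨hT, hrow, hsec.firstColIncreases hα hrow⟩, hsec.peakCond hα hT hrow⟩⟩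

lemma invW_wR_subset_invW_Tsource_iff {α : List ℕ} {T : ℕ × ℕ → ℕ} (hT : Set.InjOn T (cd α)) :
    InvW (wR α T) ⊆ InvW (wR α (Tsource α)) ↔ RowsIncrease α T := by
  rw [invW_wR_subset_invW_wR_iff]
  constructor
  · intro h i j hp hq
    have hpq : wRIndex α (i, j) < wRIndex α (i + 1, j) :=
      (wRIndex_lt_wRIndex_iff hp hq).2 (Or.inr ⟨rfl, by simp⟩)
    refine lt_of_le_of_ne (not_lt.1 fun hlt => ?_) fun heq => ?_
    · exact lt_irrefl _ ((Tsource_lt_Tsource_iff hp hq hpq).1 (h _ hp _ hq hpq hlt))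
    · simpa using hT hp hq heq
  · intro hrow p hp q hq hpq hlt
    rw [Tsource_lt_Tsource_iff hp hq hpq]
    rcases (wRIndex_lt_wRIndex_iff hp hq).1 hpq with h | ⟨h, hii⟩
    · exact h
    · obtain ⟨i, j⟩ := p
      obtain ⟨i', j'⟩ := q
      simp only at h hii
      subst h
      exact absurd hlt (hrow.lt hp hq hii).asymm

lemma invW_Tsink_subset_invW_wR_iff {n : ℕ} {α : List ℕ} {T : ℕ × ℕ → ℕ}
    (hα : IsPeakComposition n α) (hrow : RowsIncrease α T) :
    InvW (wR α (Tsink α)) ⊆ InvW (wR α T) ↔ SecondLtNextFirst α T := by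
  rw [invW_wR_subset_invW_wR_iff]
  constructor
  · intro h j hj hjl
    have hp : (1, j + 1) ∈ cd α := mem_cd.2 ⟨le_rfl, by omega, hjl, part_pos hα.1.1 (by omega) hjl⟩
    have hq : (2, j) ∈ cd α := mem_cd.2 ⟨by norm_num, hj, by omega, two_le_part hα hj hjl⟩
    have hpq := wRIndex_lt_of_row_lt hp hq (by simp)
    exact h _ hp _ hq hpq ((Tsink_lt_Tsink_iff hα hp hq hpq).2 ⟨by simp, le_rfl⟩)
  · intro hsec p hp q hq hpq hlt
    obtain ⟨hrowlt, hq2⟩ := (Tsink_lt_Tsink_iff hα hp hq hpq).1 hlt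
    exact hsec.lt_of_row_lt hα hrow hp hq hrowlt hq2

lemma isSPIT_iff_invW {n : ℕ} {α : List ℕ} {T : ℕ × ℕ → ℕ} (hα : IsPeakComposition n α)
    (hT : IsStandardFilling α T) :
    IsSPIT α T ↔
      InvW (wR α (Tsink α)) ⊆ InvW (wR α T) ∧ InvW (wR α T) ⊆ InvW (wR α (Tsource α)) := by
  rw [isSPIT_iff hα hT, invW_wR_subset_invW_Tsource_iff hT.1.injOn]
  exact ⟨fun ⟨hrow, hsec⟩ => ⟨(invW_Tsink_subset_invW_wR_iff hα hrow).2 hsec, hrow⟩,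
    fun ⟨hsink, hrow⟩ => ⟨hrow, (invW_Tsink_subset_invW_wR_iff hα hrow).1 hsink⟩⟩

/-- For a peak composition `α` of `n`, the set of row reading words of SPITs
of shape `α` is the left weak Bruhat interval `[w_r(T^sink_α), w_r(T^source_α)]_L` in `S_n`
(the left weak order being inclusion of inversion sets). -/
theorem RWr_eq_interval (n : ℕ) (α : List ℕ) (hα : IsPeakComposition n α) :
    RWr α =
      {w : List ℕ | IsPermWord n w ∧
        InvW (wR α (Tsink α)) ⊆ InvW w ∧ InvW w ⊆ InvW (wR α (Tsource α))} := by
  obtain rfl : α.sum = n := hα.1.2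
  ext w
  constructor
  · rintro ⟨T, hT, rfl⟩
    exact ⟨isPermWord_wR hT.1.1, (isSPIT_iff_invW hα hT.1.1).1 hT⟩
  · rintro ⟨hw, hinv⟩
    have hwR := wR_ofWord hw.length_eq
    refine ⟨ofWord α w, (isSPIT_iff_invW hα (isStandardFilling_ofWord hw)).2 ?_, hwR.symm⟩
    rwa [hwR]

end PaperSPIT
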